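/- Let n ≥ 1 be an integer and μ > 0. Then |μ−1| ≤ n − d_*(n+μ) if and only if μ ≤ μ_*(n) := (n²+n+2)/(n+2). (This corresponds to the massless case μ2 = 0, μ1 = μ of the scale-invariant problem, where δ = (μ−1)² and √δ = |μ−1|.) -/

import Mathlib

/-- `d_*(ν)`: zero for `ν ≤ 1`, and `(−1−ν+√(ν²+10ν−7))/2` for `ν > 1`. -/
noncomputable def dStar (ν : ℝ) : ℝ :=
  if 1 < ν then (-1 - ν + Real.sqrt (ν ^ 2 + 10 * ν - 7)) / 2 else 0

/-!
Put `ν = n + μ > 1` and `s = √(ν² + 10ν − 7)`. The inequality `|μ − 1| ≤ n − d_*(ν)` says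
`s ≤ 3n + 1 + μ − 2|μ − 1|`, and each case reduces to a polynomial identity. For `μ ≤ 1` the
bound is `3ν − 1` and `(3ν − 1)² − s² = 8(ν − 1)² ≥ 0`, so both sides hold (`μ_*(n) ≥ 1`).
For `μ > 1` the bound is `3n + 3 − μ` and `(3n + 3 − μ)² − s² = 8((n² + n + 2) − μ(n + 2))`.
-/

lemma dStar_of_one_lt {ν : ℝ} (hν : 1 < ν) :
    dStar ν = (-1 - ν + √(ν ^ 2 + 10 * ν - 7)) / 2 :=
  if_pos hν

lemma abs_sub_one_le_sub_dStar_iff {n μ : ℝ} (hν : 1 < n + μ) :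
    |μ - 1| ≤ n - dStar (n + μ) ↔
      √((n + μ) ^ 2 + 10 * (n + μ) - 7) ≤ 3 * n + 1 + μ - 2 * |μ - 1| := by
  rw [dStar_of_one_lt hν]
  constructor <;> intro h <;> linarith

lemma sqrt_le_three_mul_sub_one {ν : ℝ} (hν : 1 / 3 ≤ ν) :
    √(ν ^ 2 + 10 * ν - 7) ≤ 3 * ν - 1 :=
  Real.sqrt_le_iff.2 ⟨by linarith, by nlinarith [sq_nonneg (ν - 1)]⟩

lemma sqrt_le_three_mul_add_three_sub_iff {n μ : ℝ} (hn : 0 ≤ n) :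
    √((n + μ) ^ 2 + 10 * (n + μ) - 7) ≤ 3 * n + 3 - μ ↔ μ * (n + 2) ≤ n ^ 2 + n + 2 := by
  have gap : (3 * n + 3 - μ) ^ 2 - ((n + μ) ^ 2 + 10 * (n + μ) - 7) =
      8 * (n ^ 2 + n + 2 - μ * (n + 2)) := by ring
  rw [Real.sqrt_le_iff]
  constructor
  · rintro ⟨-, h⟩
    linarith
  · intro h
    refine ⟨?_, by linarith⟩
    nlinarith

/-- In the massless case (`√δ = |μ−1|`): `|μ−1| ≤ n − d_*(n+μ)` iff
`μ ≤ μ_*(n) = (n²+n+2)/(n+2)`. -/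
theorem massless_threshold (n : ℕ) (hn : 1 ≤ n) (μ : ℝ) (hμ : 0 < μ) :
    |μ - 1| ≤ (n : ℝ) - dStar ((n : ℝ) + μ) ↔
      μ ≤ ((n : ℝ) ^ 2 + n + 2) / ((n : ℝ) + 2) := by
  have hn' : (1 : ℝ) ≤ n := by exact_mod_cast hn
  rw [abs_sub_one_le_sub_dStar_iff (by linarith), le_div_iff₀ (by positivity)]
  rcases le_or_gt μ 1 with hμ1 | hμ1
  · rw [abs_of_nonpos (by linarith)]
    refine iff_of_true ?_ (by nlinarith)
    linarith [sqrt_le_three_mul_sub_one (ν := n + μ) (by linarith)]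
  · rw [abs_of_pos (by linarith)]
    convert sqrt_le_three_mul_add_three_sub_iff (μ := μ) (by positivity : (0 : ℝ) ≤ n) using 2
    ring
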